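/- For every z₀ ∈ [0,1] there exists a constant C > 0 such that for every integer n ≥ 1, ℙ{ Y_i > 2^(−6n/5) for every i with 0 ≤ i ≤ n } ≤ C·2^(−n/4), where Y_i := min(Z_i, 1 − Z_i). -/

import Mathlib

open MeasureTheory ProbabilityTheory

/-- `P` is the infinite product of fair Bernoulli(1/2) measures on `ℕ → Bool`:
the coordinate maps are i.i.d. fair coin flips under `P`. -/
def IsFairCoinMeasure (P : Measure (ℕ → Bool)) : Prop :=
  IsProbabilityMeasure P ∧
  iIndepFun (fun i (ω : ℕ → Bool) => ω i) P ∧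
  ∀ (i : ℕ) (b : Bool), P {ω | ω i = b} = 1/2

/-- The BEC polarization process with initial value `z₀`:
`Z_0 = z₀`, and `Z_{i+1} = Z_i²` if `ω i = true`, `Z_{i+1} = 2·Z_i − Z_i²` otherwise. -/
def Zproc (z₀ : ℝ) : ℕ → (ℕ → Bool) → ℝ
  | 0, _ => z₀
  | (i+1), ω => if ω i then (Zproc z₀ i ω)^2 else 2 * Zproc z₀ i ω - (Zproc z₀ i ω)^2

/-!
It suffices to bound the probability of `Yₙ > 2^(-6n/5)`. Let `φ z = (z(1 - z))^(2/3)` if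
`y = min z (1 - z) ≥ 2⁻³⁰` and `φ z = 10¹² / (log₂ y)¹²` otherwise. Then `0 ≤ φ ≤ 1` and
`φ(z²) + φ(2z - z²) ≤ (42/25) φ(z)`, so summing over the `2ⁿ` sign patterns of the first `n` coins
gives `∑ φ(Zₙ) ≤ (42/25)ⁿ`. On the event `φ(Zₙ) ≥ 2⁻²¹ (6n/5)⁻¹²`, so at most
`2²¹ (6n/5)¹² (42/25)ⁿ` patterns qualify, each of probability `2⁻ⁿ`, and
`(6n/5)¹² (21/25)ⁿ = O(2^(-n/4))` because `21/25 < 2^(-1/4)`.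
-/

section RealInequalities

open Real Filter

lemma rpow_two_thirds_pow_three {x : ℝ} (hx : 0 ≤ x) : (x ^ (2 / 3 : ℝ)) ^ 3 = x ^ 2 := by
  rw [← rpow_natCast, ← rpow_mul hx, ← rpow_natCast]
  norm_num

lemma rpow_two_thirds_le_iff {x c : ℝ} (hx : 0 ≤ x) (hc : 0 ≤ c) :
    x ^ (2 / 3 : ℝ) ≤ c ↔ x ^ 2 ≤ c ^ 3 := by
  rw [← pow_le_pow_iff_left₀ (rpow_nonneg hx _) hc three_ne_zero, rpow_two_thirds_pow_three hx]

lemma le_rpow_two_thirds_iff {x c : ℝ} (hx : 0 ≤ x) (hc : 0 ≤ c) :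
    c ≤ x ^ (2 / 3 : ℝ) ↔ c ^ 3 ≤ x ^ 2 := by
  rw [← pow_le_pow_iff_left₀ hc (rpow_nonneg hx _) three_ne_zero, rpow_two_thirds_pow_three hx]

lemma one_div_two_pow_eq_rpow (m : ℕ) : (1 : ℝ) / 2 ^ m = 2 ^ (-(m : ℝ)) := by
  rw [rpow_neg (by norm_num), rpow_natCast, one_div]

lemma logb_lt_neg_of_lt_one_div_two_pow {y : ℝ} (hy : 0 < y) {m : ℕ} (h : y < 1 / 2 ^ m) :
    logb 2 y < -m := by
  rwa [logb_lt_iff_lt_rpow (by norm_num) hy, ← one_div_two_pow_eq_rpow]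

lemma exists_pow_mul_pow_le_mul_pow {r s : ℝ} (hr : 0 ≤ r) (hrs : r < s) (k : ℕ) :
    ∃ C > 0, ∀ n : ℕ, (n : ℝ) ^ k * r ^ n ≤ C * s ^ n := by
  have hs : 0 < s := hr.trans_lt hrs
  have hlim := tendsto_pow_const_mul_const_pow_of_abs_lt_one k
    (r := r / s) (by rw [abs_div, abs_of_nonneg hr, abs_of_pos hs, div_lt_one hs]; exact hrs)
  obtain ⟨B, hB⟩ := hlim.bddAbove_range
  refine ⟨max B 1, by positivity, fun n => ?_⟩
  calc (n : ℝ) ^ k * r ^ n = (n : ℝ) ^ k * (r / s) ^ n * s ^ n := by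
        rw [div_pow, mul_assoc, div_mul_cancel₀ _ (by positivity)]
    _ ≤ max B 1 * s ^ n := by
        gcongr
        exact (hB ⟨n, rfl⟩).trans (le_max_left _ _)

lemma two_rpow_neg_div_four (n : ℕ) : (2 : ℝ) ^ (-(n : ℝ) / 4) = (2 ^ (-(1 / 4 : ℝ))) ^ n := by
  rw [← rpow_natCast, ← rpow_mul (by norm_num)]
  ring_nf

lemma lt_two_rpow_neg_quarter : (21 / 25 : ℝ) < 2 ^ (-(1 / 4 : ℝ)) := by
  rw [← pow_lt_pow_iff_left₀ (by norm_num) (by positivity) four_ne_zero,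
    ← rpow_natCast (2 ^ _), ← rpow_mul (by norm_num)]
  norm_num

end RealInequalities

namespace BEC

open Real

-- With `S = A + B`, `Q = AB`: `A³ + B³ = S³ - 3QS` increases in `S` once `S² ≥ 4Q`, and at
-- `S = 42/25` it equals `(42/25)³ - (126/25) Q ≥ 4 - 12p + 2p²` by the cube bound on `Q`.
lemma add_le_of_cubes {A B p : ℝ} (hA : 0 ≤ A) (hB : 0 ≤ B) (hp0 : 0 ≤ p) (hp : p ≤ 1 / 4)
    (hsum : A ^ 3 + B ^ 3 = 4 - 12 * p + 2 * p ^ 2) (hprod : (A * B) ^ 3 = (p * (2 + p)) ^ 2) :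
    A + B ≤ 42 / 25 := by
  have hQ : 0 ≤ A * B := mul_nonneg hA hB
  have hR : 0 ≤ 11588 / 15625 + 12 * p - 2 * p ^ 2 := by nlinarith
  have hAB : 126 / 25 * (A * B) ≤ 11588 / 15625 + 12 * p - 2 * p ^ 2 := by
    rw [← pow_le_pow_iff_left₀ (by positivity) hR three_ne_zero, mul_pow, hprod]
    nlinarith [sq_nonneg (p - 1 / 8), sq_nonneg (p - 1 / 4), mul_nonneg hp0 hp0,
      mul_nonneg (mul_nonneg hp0 hp0) hp0, mul_nonneg (mul_nonneg (mul_nonneg hp0 hp0) hp0) hp0,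
      mul_nonneg hp0 (sub_nonneg.mpr hp)]
  by_contra! hS
  have hcube : (A + B) ^ 3 = A ^ 3 + B ^ 3 + 3 * (A * B) * (A + B) := by ring
  have hAM : 4 * (A * B) ≤ (A + B) ^ 2 := by nlinarith [sq_nonneg (A - B)]
  have hfac : 0 < (A + B) ^ 2 + (A + B) * (42 / 25) + (42 / 25) ^ 2 - 3 * (A * B) := by nlinarith
  nlinarith [mul_pos (sub_pos.2 hS) hfac]

lemma rpow_two_thirds_add_le {z : ℝ} (h0 : 0 ≤ z) (h1 : z ≤ 1) :
    (z + z ^ 2) ^ (2 / 3 : ℝ) + (2 - 3 * z + z ^ 2) ^ (2 / 3 : ℝ) ≤ 42 / 25 := by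
  have ha : 0 ≤ z + z ^ 2 := by positivity
  have hb : 0 ≤ 2 - 3 * z + z ^ 2 := by nlinarith
  apply add_le_of_cubes (p := z * (1 - z)) (rpow_nonneg ha _) (rpow_nonneg hb _)
    (mul_nonneg h0 (by linarith)) (by nlinarith [sq_nonneg (1 - 2 * z)])
  · rw [rpow_two_thirds_pow_three ha, rpow_two_thirds_pow_three hb]; ring
  · rw [mul_pow, rpow_two_thirds_pow_three ha, rpow_two_thirds_pow_three hb]; ring

noncomputable def midPotential (z : ℝ) : ℝ := (z * (1 - z)) ^ (2 / 3 : ℝ)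

lemma midPotential_nonneg {z : ℝ} (h0 : 0 ≤ z) (h1 : z ≤ 1) : 0 ≤ midPotential z :=
  rpow_nonneg (mul_nonneg h0 (by linarith)) _

lemma midPotential_sq {z : ℝ} (h0 : 0 ≤ z) (h1 : z ≤ 1) :
    midPotential (z ^ 2) = midPotential z * (z + z ^ 2) ^ (2 / 3 : ℝ) := by
  rw [midPotential, midPotential, ← mul_rpow (mul_nonneg h0 (by linarith)) (by positivity)]
  ring_nf

lemma midPotential_two_mul_sub_sq {z : ℝ} (h0 : 0 ≤ z) (h1 : z ≤ 1) :
    midPotential (2 * z - z ^ 2) = midPotential z * (2 - 3 * z + z ^ 2) ^ (2 / 3 : ℝ) := by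
  rw [midPotential, midPotential, ← mul_rpow (mul_nonneg h0 (by linarith)) (by nlinarith)]
  ring_nf

lemma midPotential_step {z : ℝ} (h0 : 0 ≤ z) (h1 : z ≤ 1) :
    midPotential (z ^ 2) + midPotential (2 * z - z ^ 2) ≤ 42 / 25 * midPotential z := by
  rw [midPotential_sq h0 h1, midPotential_two_mul_sub_sq h0 h1, ← mul_add, mul_comm (42 / 25 : ℝ)]
  exact mul_le_mul_of_nonneg_left (rpow_two_thirds_add_le h0 h1) (midPotential_nonneg h0 h1)

lemma midPotential_two_mul_sub_sq_le {z : ℝ} (h0 : 0 ≤ z) (h1 : z ≤ 1) :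
    midPotential (2 * z - z ^ 2) ≤ 127 / 80 * midPotential z := by
  have hb : 0 ≤ 2 - 3 * z + z ^ 2 := by nlinarith
  rw [midPotential_two_mul_sub_sq h0 h1, mul_comm (127 / 80 : ℝ)]
  refine mul_le_mul_of_nonneg_left ?_ (midPotential_nonneg h0 h1)
  rw [rpow_two_thirds_le_iff hb (by norm_num)]
  nlinarith [show 2 - 3 * z + z ^ 2 ≤ 2 by nlinarith]

lemma le_midPotential {z c : ℝ} (h0 : 0 ≤ z) (h1 : z ≤ 1 / 2) (hc : 0 ≤ c)
    (h : c ^ 3 ≤ (z / 2) ^ 2) :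
    c ≤ midPotential z := by
  have hz : z / 2 ≤ z * (1 - z) := by nlinarith
  rw [midPotential, le_rpow_two_thirds_iff (by nlinarith) hc]
  exact h.trans (pow_le_pow_left₀ (by linarith) hz 2)

lemma midPotential_le {w c : ℝ} (h0 : 0 ≤ w) (h1 : w ≤ 1) (hc : 0 ≤ c) (h : w ^ 2 ≤ c ^ 3) :
    midPotential w ≤ c := by
  have hw : w * (1 - w) ≤ w := by nlinarith
  rw [midPotential, rpow_two_thirds_le_iff (by nlinarith) hc]
  exact (pow_le_pow_left₀ (by nlinarith) hw 2).trans h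

-- `logb 2 0 = 0`, so `tailPotential 0 = 10 ^ 12 / 0 = 0`.
noncomputable def tailPotential (y : ℝ) : ℝ := 10 ^ 12 / logb 2 y ^ 12

lemma tailPotential_sq (y : ℝ) : tailPotential (y ^ 2) = tailPotential y / 4096 := by
  simp only [tailPotential, logb_pow]
  push_cast
  ring

lemma tailPotential_two_rpow_neg (x : ℝ) : tailPotential (2 ^ (-x)) = 10 ^ 12 / x ^ 12 := by
  rw [tailPotential, logb_rpow (by norm_num) (by norm_num), Even.neg_pow (by decide)]

lemma tailPotential_le_tailPotential {a b : ℝ} (ha : 0 < a) (hab : a ≤ b) (hb : b < 1) :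
    tailPotential a ≤ tailPotential b := by
  have hlog : logb 2 a ≤ logb 2 b := logb_le_logb_of_le (by norm_num) ha hab
  have hneg : logb 2 b < 0 := logb_neg (by norm_num) (ha.trans_le hab) hb
  apply div_le_div_of_nonneg_left (by norm_num) (Even.pow_pos (by decide) hneg.ne)
  rw [← Even.neg_pow (by decide) (logb 2 b), ← Even.neg_pow (by decide) (logb 2 a)]
  exact pow_le_pow_left₀ (by linarith) (by linarith) 12

lemma tailPotential_nonneg (y : ℝ) : 0 ≤ tailPotential y :=
  div_nonneg (by norm_num) (Even.pow_nonneg (by decide) _)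

lemma tailPotential_one_div_two_pow (m : ℕ) :
    tailPotential (1 / 2 ^ m) = 10 ^ 12 / (m : ℝ) ^ 12 := by
  rw [one_div_two_pow_eq_rpow, tailPotential_two_rpow_neg]

lemma tailPotential_two_mul_le {y : ℝ} (hy : 0 < y) (h : y < 1 / 2 ^ 30) :
    tailPotential (2 * y) ≤ (30 / 29) ^ 12 * tailPotential y := by
  have hlog : logb 2 y < -30 := by exact_mod_cast logb_lt_neg_of_lt_one_div_two_pow hy h
  have h2y : logb 2 (2 * y) = 1 + logb 2 y := by
    rw [logb_mul (by norm_num) hy.ne', logb_self_eq_one (by norm_num)]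
  have hpow : (29 / 30 * logb 2 y) ^ 12 ≤ logb 2 (2 * y) ^ 12 := by
    rw [h2y, ← Even.neg_pow (by decide) (1 + logb 2 y), ← Even.neg_pow (by decide) (29 / 30 * _)]
    exact pow_le_pow_left₀ (by linarith) (by linarith) 12
  calc tailPotential (2 * y) ≤ 10 ^ 12 / (29 / 30 * logb 2 y) ^ 12 :=
        div_le_div_of_nonneg_left (by norm_num) (Even.pow_pos (by decide) (by linarith)) hpow
    _ = (30 / 29) ^ 12 * tailPotential y := by
        rw [tailPotential]; field_simp

lemma tailPotential_sq_le_midPotential_of_mem {z : ℝ} {a b : ℕ} (ha : 1 ≤ a)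
    (hb : 1 / 2 ^ b ≤ z) (hz : z ≤ 1 / 2 ^ a)
    (h : (400 / 37 * (10 ^ 12 / (2 * a : ℝ) ^ 12)) ^ 3 ≤ (1 / 2 ^ (b + 1)) ^ 2) :
    tailPotential (z ^ 2) ≤ 37 / 400 * midPotential z := by
  have hz0 : 0 < z := lt_of_lt_of_le (by positivity) hb
  have hz1 : z ≤ 1 / 2 :=
    hz.trans (one_div_le_one_div_of_le (by norm_num) (le_self_pow₀ (by norm_num) (by omega)))
  calc tailPotential (z ^ 2) ≤ tailPotential (1 / 2 ^ (2 * a)) := by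
        refine tailPotential_le_tailPotential (by positivity) ?_ ?_
        · rw [pow_mul', ← one_div_pow]
          exact pow_le_pow_left₀ hz0.le hz 2
        · exact (div_lt_one (by positivity)).mpr (one_lt_pow₀ (by norm_num) (by omega))
    _ ≤ 37 / 400 * midPotential z := by
        rw [tailPotential_one_div_two_pow, ← div_le_iff₀' (by norm_num)]
        refine le_midPotential hz0.le hz1 (by positivity) ?_
        calc _ = (400 / 37 * (10 ^ 12 / (2 * a : ℝ) ^ 12)) ^ 3 := by push_cast; ring
          _ ≤ (1 / 2 ^ (b + 1)) ^ 2 := h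
          _ = ((1 / 2 ^ b) / 2) ^ 2 := by rw [pow_succ]; ring
          _ ≤ (z / 2) ^ 2 := by gcongr

-- `37/400 = 42/25 - 127/80`
lemma tailPotential_sq_le_midPotential {z : ℝ} (h30 : 1 / 2 ^ 30 ≤ z) (h15 : z < 1 / 2 ^ 15) :
    tailPotential (z ^ 2) ≤ 37 / 400 * midPotential z := by
  rcases le_or_gt z (1 / 2 ^ 21) with h21 | h21
  · exact tailPotential_sq_le_midPotential_of_mem (a := 21) (b := 30) (by norm_num) h30 h21
      (by norm_num)
  · exact tailPotential_sq_le_midPotential_of_mem (a := 15) (b := 21) (by norm_num) h21.le h15.le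
      (by norm_num)

lemma midPotential_le_tailPotential {y w : ℝ} (hw : 1 / 2 ^ 30 ≤ w) (hwy : w ≤ 2 * y)
    (hy : y < 1 / 2 ^ 30) : midPotential w ≤ (42 / 25 - 1 / 4096) * tailPotential y := by
  calc midPotential w ≤ (42 / 25 - 1 / 4096) * tailPotential (1 / 2 ^ 31) := by
        rw [tailPotential_one_div_two_pow]
        refine midPotential_le (by linarith [show (0 : ℝ) < 1 / 2 ^ 30 by norm_num]) (by linarith)
          (by norm_num) ?_
        calc w ^ 2 ≤ (2 / 2 ^ 30) ^ 2 := by gcongr; linarith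
          _ ≤ _ := by norm_num
    _ ≤ (42 / 25 - 1 / 4096) * tailPotential y := by
        gcongr
        exact tailPotential_le_tailPotential (by norm_num) (by linarith) (by linarith)

-- Below `2⁻³⁰`, `midPotential` would be exponentially small in `log₂ (1/y)`; the tail is only
-- polynomially small, yet still contracts: a squaring step divides it by `2¹²`, and the other step
-- multiplies it by at most `(30/29)¹²`.
noncomputable def potential (z : ℝ) : ℝ :=
  if 1 / 2 ^ 30 ≤ min z (1 - z) then midPotential z else tailPotential (min z (1 - z))

lemma potential_eq_midPotential {z : ℝ} (h : 1 / 2 ^ 30 ≤ z) (h' : 1 / 2 ^ 30 ≤ 1 - z) :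
    potential z = midPotential z :=
  if_pos (le_min h h')

lemma potential_eq_tailPotential {z : ℝ} (h : z < 1 / 2 ^ 30) :
    potential z = tailPotential z := by
  have hz : min z (1 - z) = z :=
    min_eq_left (by linarith [show (1 : ℝ) / 2 ^ 30 < 1 / 2 by norm_num])
  rw [potential, hz, if_neg h.not_ge]

lemma potential_one_sub (z : ℝ) : potential (1 - z) = potential z := by
  simp only [potential, midPotential, sub_sub_cancel, min_comm (1 - z) z, mul_comm (1 - z) z]

lemma potential_step_of_le_half {z : ℝ} (h0 : 0 ≤ z) (h1 : z ≤ 1 / 2) :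
    potential (z ^ 2) + potential (2 * z - z ^ 2) ≤ 42 / 25 * potential z := by
  rcases h0.eq_or_lt with rfl | hz0
  · norm_num [potential, tailPotential]
  have hw : z ≤ 2 * z - z ^ 2 := by nlinarith
  have hw' : 2 * z - z ^ 2 ≤ 2 * z := by nlinarith
  rcases le_or_gt (1 / 2 ^ 15) z with h15 | h15
  · have h30 : (1 : ℝ) / 2 ^ 30 ≤ (1 / 2 ^ 15) ^ 2 := by norm_num
    rw [potential_eq_midPotential (by nlinarith) (by nlinarith),
      potential_eq_midPotential (by linarith) (by nlinarith),
      potential_eq_midPotential (by linarith) (by linarith)]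
    exact midPotential_step h0 (by linarith)
  have hsq : z ^ 2 < 1 / 2 ^ 30 := by
    nlinarith [show (1 : ℝ) / 2 ^ 30 = (1 / 2 ^ 15) ^ 2 by norm_num]
  rw [potential_eq_tailPotential hsq]
  rcases le_or_gt (1 / 2 ^ 30) z with h30 | h30
  · rw [potential_eq_midPotential h30 (by linarith),
      potential_eq_midPotential (by linarith) (by nlinarith)]
    linarith [tailPotential_sq_le_midPotential h30 h15,
      midPotential_two_mul_sub_sq_le h0 (by linarith)]
  rw [potential_eq_tailPotential h30, tailPotential_sq]
  rcases le_or_gt (1 / 2 ^ 30) (2 * z - z ^ 2) with hw30 | hw30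
  · rw [potential_eq_midPotential hw30 (by nlinarith)]
    linarith [midPotential_le_tailPotential hw30 hw' h30]
  · rw [potential_eq_tailPotential hw30]
    have h2z : tailPotential (2 * z - z ^ 2) ≤ tailPotential (2 * z) :=
      tailPotential_le_tailPotential (by linarith) hw' (by linarith)
    have hpow : (30 / 29 : ℝ) ^ 12 ≤ 42 / 25 - 1 / 4096 := by norm_num
    nlinarith [tailPotential_two_mul_le hz0 h30, tailPotential_nonneg z]

lemma potential_step {z : ℝ} (h0 : 0 ≤ z) (h1 : z ≤ 1) :
    potential (z ^ 2) + potential (2 * z - z ^ 2) ≤ 42 / 25 * potential z := by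
  rcases le_or_gt z (1 / 2) with h | h
  · exact potential_step_of_le_half h0 h
  · have e1 : z ^ 2 = 1 - (2 * (1 - z) - (1 - z) ^ 2) := by ring
    have e2 : 2 * z - z ^ 2 = 1 - (1 - z) ^ 2 := by ring
    rw [e2, e1, potential_one_sub, potential_one_sub, ← potential_one_sub z, add_comm]
    exact potential_step_of_le_half (by linarith) (by linarith)

lemma potential_nonneg (z : ℝ) : 0 ≤ potential z := by
  unfold potential
  split_ifs with h
  · have hpos : (0 : ℝ) < min z (1 - z) := lt_of_lt_of_le (by norm_num) h
    rw [lt_min_iff] at hpos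
    exact rpow_nonneg (mul_nonneg hpos.1.le hpos.2.le) _
  · exact tailPotential_nonneg _

lemma potential_le_one {z : ℝ} (h0 : 0 ≤ z) (h1 : z ≤ 1) : potential z ≤ 1 := by
  unfold potential
  split_ifs with h
  · exact rpow_le_one (by nlinarith) (by nlinarith) (by norm_num)
  · have hy : 0 ≤ min z (1 - z) := le_min h0 (by linarith)
    rcases hy.eq_or_lt with hy | hy
    · norm_num [← hy, tailPotential]
    calc tailPotential (min z (1 - z)) ≤ tailPotential (1 / 2 ^ 30) :=
          tailPotential_le_tailPotential hy (not_le.mp h).le (by norm_num)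
      _ ≤ 1 := by rw [tailPotential_one_div_two_pow]; norm_num

lemma potential_ge {z t : ℝ} (ht : 1 ≤ t) (h : 2 ^ (-t) < min z (1 - z)) :
    1 / (2 ^ 21 * t ^ 12) ≤ potential z := by
  wlog hz : z ≤ 1 / 2 generalizing z
  · rw [← potential_one_sub]
    exact this (by rwa [sub_sub_cancel, min_comm]) (by linarith)
  rw [min_eq_left (by linarith)] at h
  have hz0 : 0 < z := lt_trans (rpow_pos_of_pos (by norm_num) _) h
  rcases le_or_gt (1 / 2 ^ 30) z with h30 | h30
  · rw [potential_eq_midPotential h30 (by linarith [show (1 : ℝ) / 2 ^ 30 ≤ 1 / 2 by norm_num])]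
    calc 1 / (2 ^ 21 * t ^ 12) ≤ 1 / 2 ^ 21 := by
          gcongr
          exact le_mul_of_one_le_right (by norm_num) (one_le_pow₀ ht)
      _ ≤ midPotential z := by
          refine le_midPotential hz0.le hz (by norm_num) ?_
          calc _ ≤ ((1 / 2 ^ 30 : ℝ) / 2) ^ 2 := by norm_num
            _ ≤ (z / 2) ^ 2 := by gcongr
  · rw [potential_eq_tailPotential h30]
    calc 1 / (2 ^ 21 * t ^ 12) ≤ 10 ^ 12 / t ^ 12 := by
          rw [div_le_div_iff₀ (by positivity) (by positivity)]
          nlinarith [one_le_pow₀ (n := 12) ht]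
      _ = tailPotential (2 ^ (-t)) := (tailPotential_two_rpow_neg t).symm
      _ ≤ tailPotential z :=
          tailPotential_le_tailPotential (rpow_pos_of_pos (by norm_num) _) h.le (by linarith)

end BEC

namespace IsFairCoinMeasure

open Finset

variable {P : Measure (ℕ → Bool)}

lemma measureReal_cylinder (hP : IsFairCoinMeasure P) {n : ℕ} (s : Fin n → Bool) :
    P.real {ω | ∀ i : Fin n, ω i = s i} = (1 / 2) ^ n := by
  have hind : iIndepFun (fun (i : Fin n) (ω : ℕ → Bool) => ω i) P :=
    hP.2.1.precomp Fin.val_injective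
  have hcyl : {ω : ℕ → Bool | ∀ i : Fin n, ω i = s i} = ⋂ i ∈ univ, (fun ω => ω i) ⁻¹' {s i} := by
    ext ω; simp
  rw [measureReal_def, hcyl,
    hind.measure_inter_preimage_eq_mul _ fun _ _ => measurableSet_singleton _]
  simp [Set.preimage, hP.2.2]

lemma measureReal_le_card_mul (hP : IsFairCoinMeasure P) {n : ℕ} (T : Finset (Fin n → Bool))
    {E : Set (ℕ → Bool)} (hE : ∀ ω ∈ E, (fun i : Fin n => ω i) ∈ T) :
    P.real E ≤ #T * (1 / 2) ^ n := by
  have : IsProbabilityMeasure P := hP.1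
  calc P.real E ≤ P.real (⋃ s ∈ T, {ω | ∀ i : Fin n, ω i = s i}) :=
        measureReal_mono (fun ω hω => Set.mem_biUnion (hE ω hω) fun _ => rfl) (measure_ne_top _ _)
    _ ≤ ∑ s ∈ T, P.real {ω | ∀ i : Fin n, ω i = s i} := measureReal_biUnion_finset_le _ _
    _ = #T * (1 / 2) ^ n := by simp [hP.measureReal_cylinder]

end IsFairCoinMeasure

section SignPatterns

open Finset BEC

variable {z₀ : ℝ}

namespace Zproc

lemma mem_Icc (hz : z₀ ∈ Set.Icc (0 : ℝ) 1) (ω : ℕ → Bool) (i : ℕ) :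
    Zproc z₀ i ω ∈ Set.Icc (0 : ℝ) 1 := by
  induction i with
  | zero => exact hz
  | succ i ih =>
    obtain ⟨h0, h1⟩ := ih
    simp only [Zproc]
    split_ifs <;> constructor <;> nlinarith

lemma congr_of_forall_lt {ω ω' : ℕ → Bool} {k : ℕ} (h : ∀ j < k, ω j = ω' j) :
    Zproc z₀ k ω = Zproc z₀ k ω' := by
  induction k with
  | zero => rfl
  | succ k ih =>
    simp only [Zproc, h k k.lt_succ_self, ih fun j hj => h j (hj.trans k.lt_succ_self)]

end Zproc

def padFalse {n : ℕ} (s : Fin n → Bool) : ℕ → Bool :=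
  fun i => if h : i < n then s ⟨i, h⟩ else false

lemma Zproc_padFalse_restrict (n : ℕ) (ω : ℕ → Bool) :
    Zproc z₀ n (padFalse fun i : Fin n => ω i) = Zproc z₀ n ω :=
  Zproc.congr_of_forall_lt fun j hj => by simp [padFalse, hj]

lemma Zproc_padFalse_snoc {n : ℕ} (s : Fin n → Bool) (b : Bool) :
    Zproc z₀ (n + 1) (padFalse (Fin.snoc s b : Fin (n + 1) → Bool)) =
      if b then Zproc z₀ n (padFalse s) ^ 2
      else 2 * Zproc z₀ n (padFalse s) - Zproc z₀ n (padFalse s) ^ 2 := by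
  have hlast : padFalse (Fin.snoc s b : Fin (n + 1) → Bool) n = b := by
    simp [padFalse, Fin.snoc]
  have hinit : ∀ j < n, padFalse (Fin.snoc s b : Fin (n + 1) → Bool) j = padFalse s j := by
    intro j hj
    simp [padFalse, Fin.snoc, hj, Nat.lt_succ_of_lt hj]
  simp only [Zproc, hlast, Zproc.congr_of_forall_lt hinit]

lemma sum_potential_Zproc_le (hz : z₀ ∈ Set.Icc (0 : ℝ) 1) (n : ℕ) :
    ∑ s : Fin n → Bool, potential (Zproc z₀ n (padFalse s)) ≤ (42 / 25) ^ n * potential z₀ := by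
  induction n with
  | zero => simp [Zproc]
  | succ n ih =>
    rw [← (Fin.snocEquiv fun _ => Bool).sum_comp, Fintype.sum_prod_type_right]
    calc ∑ s : Fin n → Bool, ∑ b : Bool, potential (Zproc z₀ (n + 1) (padFalse (Fin.snoc s b)))
        = ∑ s : Fin n → Bool, (potential (Zproc z₀ n (padFalse s) ^ 2) +
            potential (2 * Zproc z₀ n (padFalse s) - Zproc z₀ n (padFalse s) ^ 2)) := by
          simp [Zproc_padFalse_snoc]
      _ ≤ ∑ s : Fin n → Bool, 42 / 25 * potential (Zproc z₀ n (padFalse s)) :=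
          sum_le_sum fun s _ => potential_step (Zproc.mem_Icc hz _ n).1 (Zproc.mem_Icc hz _ n).2
      _ ≤ (42 / 25) ^ (n + 1) * potential z₀ := by
          rw [← mul_sum, pow_succ', mul_assoc]
          gcongr

noncomputable def unpolarizedPatterns (z₀ t : ℝ) (n : ℕ) : Finset (Fin n → Bool) :=
  {s | 2 ^ (-t) < min (Zproc z₀ n (padFalse s)) (1 - Zproc z₀ n (padFalse s))}

lemma card_unpolarizedPatterns_le (hz : z₀ ∈ Set.Icc (0 : ℝ) 1) (n : ℕ) {t : ℝ} (ht : 1 ≤ t) :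
    (#(unpolarizedPatterns z₀ t n) : ℝ) ≤ 2 ^ 21 * t ^ 12 * (42 / 25) ^ n := by
  set T := unpolarizedPatterns z₀ t n
  have hsum : #T * (1 / (2 ^ 21 * t ^ 12)) ≤ (42 / 25) ^ n :=
    calc #T * (1 / (2 ^ 21 * t ^ 12)) ≤ ∑ s ∈ T, potential (Zproc z₀ n (padFalse s)) := by
          rw [← nsmul_eq_mul]
          exact card_nsmul_le_sum _ _ _ fun s hs => potential_ge ht (mem_filter.mp hs).2
      _ ≤ ∑ s : Fin n → Bool, potential (Zproc z₀ n (padFalse s)) :=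
          sum_le_sum_of_subset_of_nonneg (subset_univ T) fun _ _ _ => potential_nonneg _
      _ ≤ (42 / 25) ^ n * potential z₀ := sum_potential_Zproc_le hz n
      _ ≤ (42 / 25) ^ n := mul_le_of_le_one_right (by positivity) (potential_le_one hz.1 hz.2)
  rwa [mul_one_div, div_le_iff₀ (by positivity), mul_comm] at hsum

end SignPatterns

theorem stmt9 (z₀ : ℝ) (hz : z₀ ∈ Set.Icc (0:ℝ) 1)
    (P : Measure (ℕ → Bool)) (hP : IsFairCoinMeasure P) :
    ∃ C : ℝ, 0 < C ∧ ∀ n : ℕ, 1 ≤ n →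
      (P {ω | ∀ i : ℕ, i ≤ n →
          (2:ℝ) ^ (-(6 * (n:ℝ) / 5)) < min (Zproc z₀ i ω) (1 - Zproc z₀ i ω)}).toReal
        ≤ C * (2:ℝ) ^ (-(n:ℝ) / 4) := by
  obtain ⟨C, hC0, hC⟩ := exists_pow_mul_pow_le_mul_pow (by norm_num) lt_two_rpow_neg_quarter 12
  refine ⟨2 ^ 21 * (6 / 5) ^ 12 * C, by positivity, fun n hn => ?_⟩
  have ht : (1 : ℝ) ≤ 6 * n / 5 := by
    have : (1 : ℝ) ≤ n := by exact_mod_cast hn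
    linarith
  calc (P _).toReal ≤ ((unpolarizedPatterns z₀ (6 * n / 5) n).card : ℝ) * (1 / 2) ^ n :=
        hP.measureReal_le_card_mul _ fun ω hω => by
          simpa [unpolarizedPatterns, Zproc_padFalse_restrict] using (hω : ∀ i ≤ n, _) n le_rfl
    _ ≤ 2 ^ 21 * (6 * n / 5) ^ 12 * (42 / 25) ^ n * (1 / 2) ^ n := by
        gcongr
        exact card_unpolarizedPatterns_le hz n ht
    _ = 2 ^ 21 * (6 / 5) ^ 12 * ((n : ℝ) ^ 12 * (21 / 25) ^ n) := by
        rw [mul_assoc _ ((42 / 25 : ℝ) ^ n), ← mul_pow]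
        ring
    _ ≤ 2 ^ 21 * (6 / 5) ^ 12 * C * 2 ^ (-(n : ℝ) / 4) := by
        rw [two_rpow_neg_div_four, mul_assoc _ C]
        exact mul_le_mul_of_nonneg_left (hC n) (by positivity)
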